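/- Let ∼ be a bisimulation equivalence on a turn-based game that respects the partition, and let τ be any strategy profile in the quotient game. Define a strategy profile σ in the original game by: for a history h ending in a player-i vertex v, choose σᵢ(h) to be some successor x of v with [x] = τᵢ([h₀]…[hₙ]) (such x exists by bisimulation). Then the outcome of σ from v₀ is componentwise ∼_q-related to the outcome of τ from [v₀]: [Out(σ)(v₀)ₙ] = Out(τ)([v₀])ₙ for all n. -/

import Mathlib

/-- A history: a finite path starting at `v0`. -/
def IsHist {V : Type} (E : V → V → Prop) (v0 : V) (h : List V) : Prop :=
  h.head? = some v0 ∧ h.Chain' E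

/-- Last vertex of a history (with default `v0`). -/
def lastOf {V : Type} (v0 : V) (h : List V) : V := h.getLast?.getD v0

/-- A strategy profile `σ : P → List V → V` is valid if on every history it
proposes a successor of the last vertex. -/
def ValidProfile {V P : Type} (E : V → V → Prop) (owner : V → P) (v0 : V)
    (σ : P → List V → V) : Prop :=
  ∀ h, IsHist E v0 h → E (lastOf v0 h) (σ (owner (lastOf v0 h)) h)

/-- The successive histories produced by playing `σ` after the history `h0`. -/
def outHistFrom {V P : Type} (owner : V → P) (σ : P → List V → V) (v0 : V) (h0 : List V) :
    ℕ → List V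
  | 0 => h0
  | n + 1 =>
      outHistFrom owner σ v0 h0 n ++
        [σ (owner (lastOf v0 (outHistFrom owner σ v0 h0 n))) (outHistFrom owner σ v0 h0 n)]

/-- The infinite play obtained by the history `h0` followed by the outcome of `σ`. -/
def playFrom {V P : Type} (owner : V → P) (σ : P → List V → V) (v0 : V) (h0 : List V)
    (n : ℕ) : V :=
  (outHistFrom owner σ v0 h0 (n + 1)).getD n v0

/-- The outcome of the strategy profile `σ` from `v0`. -/
def outcomeSeq {V P : Type} (owner : V → P) (σ : P → List V → V) (v0 : V) : ℕ → V :=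
  playFrom owner σ v0 [v0]

/-- `σ` is a Nash equilibrium from `v0`: no player has a profitable deviation. -/
def IsNE {V P : Type} [DecidableEq P] (E : V → V → Prop) (owner : V → P) (v0 : V)
    (Gain : P → (ℕ → V) → Prop) (σ : P → List V → V) : Prop :=
  ∀ (i : P) (σ' : List V → V), (∀ h, IsHist E v0 h → E (lastOf v0 h) (σ' h)) →
    Gain i (outcomeSeq owner (Function.update σ i σ') v0) → Gain i (outcomeSeq owner σ v0)

/-- `σ` is a subgame perfect equilibrium from `v0`: after every history, no player has a
profitable deviation (gains being evaluated on the full play extending the history). -/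
def IsSPE {V P : Type} [DecidableEq P] (E : V → V → Prop) (owner : V → P) (v0 : V)
    (Gain : P → (ℕ → V) → Prop) (σ : P → List V → V) : Prop :=
  ∀ h0, IsHist E v0 h0 →
    ∀ (i : P) (σ' : List V → V), (∀ h, IsHist E v0 h → E (lastOf v0 h) (σ' h)) →
      Gain i (playFrom owner (Function.update σ i σ') v0 h0) →
      Gain i (playFrom owner σ v0 h0)

/-- `σ` is uniform w.r.t. the relation `r`: on componentwise `r`-related histories,
each player's choices are `r`-related. -/
def Uniform {V P : Type} (E : V → V → Prop) (v0 : V) (r : V → V → Prop)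
    (σ : P → List V → V) : Prop :=
  ∀ (i : P) (h h' : List V), IsHist E v0 h → IsHist E v0 h' → List.Forall₂ r h h' →
    r (σ i h) (σ i h')

/-- Edges of the quotient game. -/
def QEdge {V : Type} (s : Setoid V) (E : V → V → Prop) :
    Quotient s → Quotient s → Prop :=
  fun c c' => ∃ v v', Quotient.mk s v = c ∧ Quotient.mk s v' = c' ∧ E v v'

/-! Induction on the length of the play: every history generated by `σ` is a history of the
game, so the next choice of `σ` lands in the class chosen by `τ` on the projected history;
hence projecting commutes with extending the play. -/

section Projection

variable {V W P Q : Type} {E : V → V → Prop} {owner : V → P} {v0 : V}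

theorem lastOf_map (f : V → W) (h : List V) : lastOf (f v0) (h.map f) = f (lastOf v0 h) := by
  unfold lastOf
  rw [List.getLast?_map]
  cases h.getLast? <;> rfl

theorem IsHist.append_singleton {h : List V} {w : V} (hh : IsHist E v0 h)
    (hw : E (lastOf v0 h) w) : IsHist E v0 (h ++ [w]) := by
  have hne : h ≠ [] := by
    rintro rfl
    simp [IsHist] at hh
  refine ⟨by rw [List.head?_append_of_ne_nil _ hne]; exact hh.1, ?_⟩
  refine hh.2.append (List.isChain_singleton w) fun x hx y hy => ?_
  obtain rfl : y = w := by simpa using hy.symm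
  have hlast : lastOf v0 h = x := by simp [lastOf, Option.mem_def.mp hx]
  exact hlast ▸ hw

theorem isHist_outHistFrom {σ : P → List V → V} (hσ : ValidProfile E owner v0 σ)
    {h0 : List V} (hh0 : IsHist E v0 h0) (n : ℕ) :
    IsHist E v0 (outHistFrom owner σ v0 h0 n) := by
  induction n with
  | zero => exact hh0
  | succ n ih => exact ih.append_singleton (hσ _ ih)

variable {f : V → W} {qowner : W → Q} {σ : P → List V → V} {τ : Q → List W → W}

theorem map_outHistFrom (hσ : ValidProfile E owner v0 σ)
    (hfollow : ∀ h, IsHist E v0 h →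
      f (σ (owner (lastOf v0 h)) h) = τ (qowner (f (lastOf v0 h))) (h.map f))
    {h0 : List V} (hh0 : IsHist E v0 h0) (n : ℕ) :
    (outHistFrom owner σ v0 h0 n).map f = outHistFrom qowner τ (f v0) (h0.map f) n := by
  induction n with
  | zero => rfl
  | succ n ih =>
    have hhist := isHist_outHistFrom hσ hh0 n
    simp only [outHistFrom, List.map_append, List.map_cons, List.map_nil, ← ih,
      hfollow _ hhist, lastOf_map]

theorem map_outcomeSeq (hσ : ValidProfile E owner v0 σ)
    (hfollow : ∀ h, IsHist E v0 h →
      f (σ (owner (lastOf v0 h)) h) = τ (qowner (f (lastOf v0 h))) (h.map f))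
    (n : ℕ) : f (outcomeSeq owner σ v0 n) = outcomeSeq qowner τ (f v0) n := by
  have hstart : IsHist E v0 [v0] := ⟨rfl, List.isChain_singleton v0⟩
  unfold outcomeSeq playFrom
  rw [← List.getD_map (l := outHistFrom owner σ v0 [v0] (n + 1)) (f := f),
    map_outHistFrom hσ hfollow hstart]
  rfl

end Projection

theorem stmt10_general {V P : Type} (E : V → V → Prop) (owner : V → P) (v0 : V)
    (s : Setoid V)
    (qowner : Quotient s → P)
    (τ : P → List (Quotient s) → Quotient s)
    (σ : P → List V → V)
    (hσ : ∀ h, IsHist E v0 h →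
      E (lastOf v0 h) (σ (owner (lastOf v0 h)) h) ∧
      Quotient.mk s (σ (owner (lastOf v0 h)) h) =
        τ (qowner (Quotient.mk s (lastOf v0 h))) (h.map (Quotient.mk s))) :
    ∀ n, Quotient.mk s (outcomeSeq owner σ v0 n) =
      outcomeSeq qowner τ (Quotient.mk s v0) n :=
  map_outcomeSeq (fun h hh => (hσ h hh).1) fun h hh => (hσ h hh).2

/-- Given any strategy profile `τ` of the quotient game and a strategy profile `σ` of the
original game that on every history picks a successor of the last vertex lying in the
class prescribed by `τ`, the outcome of `σ` from `v₀` is componentwise `∼_q`-related to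
the outcome of `τ` from `[v₀]`. -/
theorem stmt10 {V P : Type} [DecidableEq P] (E : V → V → Prop) (owner : V → P) (v0 : V)
    (s : Setoid V)
    (hbisim : ∀ v v' w, s.r v v' → E v w → ∃ w', E v' w' ∧ s.r w w')
    (hpart : ∀ v v', s.r v v' → owner v = owner v')
    (htotal : ∀ v : V, ∃ v', E v v')
    (qowner : Quotient s → P) (hqowner : ∀ v, qowner (Quotient.mk s v) = owner v)
    (τ : P → List (Quotient s) → Quotient s)
    (hτvalid : ValidProfile (QEdge s E) qowner (Quotient.mk s v0) τ)
    (σ : P → List V → V)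
    (hσ : ∀ h, IsHist E v0 h →
      E (lastOf v0 h) (σ (owner (lastOf v0 h)) h) ∧
      Quotient.mk s (σ (owner (lastOf v0 h)) h) =
        τ (qowner (Quotient.mk s (lastOf v0 h))) (h.map (Quotient.mk s))) :
    ∀ n, Quotient.mk s (outcomeSeq owner σ v0 n) =
      outcomeSeq qowner τ (Quotient.mk s v0) n :=
  stmt10_general E owner v0 s qowner τ σ hσ
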